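/- arXiv:2105.13954 — 3 statements merged into one kernel-verified Lean document; each statement's English description precedes it below -/
import Mathlib

section
/- Consider an n-level optimization problem in which (i) S_1 ⊆ ℝ^{d_1} is nonempty and compact, (ii) each f_i is continuous, (iii) for every i = 2,…,n and every (x_1,…,x_{i−1}) ∈ S_1 × ℝ^{d_2} × ⋯ × ℝ^{d_{i−1}}, the minimization of x_i ↦ F_i(x_1,…,x_{i−1},x_i) over ℝ^{d_i} has a unique minimizer x_i^*(x_1,…,x_{i−1}), and (iv) for every i and every point (x̄_1,…,x̄_{i−1}) the optimal-set mapping X_i^*(x_1,…,x_{i−1}) = argmin_{x_i} F_i(x_1,…,x_{i−1},x_i) is uniformly bounded near (x̄_1,…,x̄_{i−1}) (its union over some neighborhood is bounded). Then the reduced upper-level objective F_1(x_1) = f_1(x_1, x_2^*(x_1), …, x_n^*(x_1, x_2^*(x_1), …)) is continuous on S_1, each reaction map x_i^* is continuous, and F_1 attains its minimum on S_1 (the n-level problem has an optimal solution). -/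
open Filter Topology

open Bornology in
lemma minsel_continuousOn {X Y : Type*} [MetricSpace X] [MetricSpace Y] [ProperSpace Y]
    (A : Set X) (g : X → Y → ℝ) (s : X → Y)
    (hg : ContinuousOn (fun p : X × Y => g p.1 p.2) (A ×ˢ Set.univ))
    (hmins : ∀ x ∈ A, ∀ v, g x (s x) ≤ g x v)
    (huniq : ∀ x ∈ A, ∀ v, (∀ w, g x v ≤ g x w) → v = s x)
    (hbdd : ∀ x ∈ A, ∃ N ∈ 𝓝 x, IsBounded (s '' N)) :
    ContinuousOn s A := by
  intro xb hxb
  obtain ⟨N, hN, hNb⟩ := hbdd xb hxb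
  have hK : IsCompact (closure (s '' N)) := hNb.isCompact_closure
  rw [ContinuousWithinAt]
  apply tendsto_of_subseq_tendsto
  intro u hu
  have huA : ∀ᶠ k in atTop, u k ∈ A := hu.eventually eventually_mem_nhdsWithin
  have hux : Tendsto u atTop (𝓝 xb) := hu.mono_right nhdsWithin_le_nhds
  have huN : ∀ᶠ k in atTop, u k ∈ N := hux.eventually_mem hN
  have hmem : ∃ᶠ k in atTop, s (u k) ∈ closure (s '' N) :=
    (huN.mono (fun k hk => subset_closure (Set.mem_image_of_mem s hk))).frequently
  obtain ⟨y, -, φ, hφ, hyt⟩ := hK.tendsto_subseq' hmem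
  have hφt : Tendsto φ atTop atTop := hφ.tendsto_atTop
  have huφA : ∀ᶠ k in atTop, u (φ k) ∈ A := hφt.eventually huA
  have hy : y = s xb := by
    apply huniq xb hxb
    intro w
    have hp : Tendsto (fun k => (u (φ k), s (u (φ k)))) atTop (𝓝[A ×ˢ Set.univ] (xb, y)) := by
      rw [tendsto_nhdsWithin_iff]
      exact ⟨(hux.comp hφt).prodMk_nhds hyt, huφA.mono (fun k hk => ⟨hk, trivial⟩)⟩
    have h1 : Tendsto (fun k => g (u (φ k)) (s (u (φ k)))) atTop (𝓝 (g xb y)) :=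
      (hg (xb, y) ⟨hxb, trivial⟩).tendsto.comp hp
    have hpw : Tendsto (fun k => (u (φ k), w)) atTop (𝓝[A ×ˢ Set.univ] (xb, w)) := by
      rw [tendsto_nhdsWithin_iff]
      exact ⟨(hux.comp hφt).prodMk_nhds tendsto_const_nhds,
        huφA.mono (fun k hk => ⟨hk, trivial⟩)⟩
    have h2 : Tendsto (fun k => g (u (φ k)) w) atTop (𝓝 (g xb w)) :=
      (hg (xb, w) ⟨hxb, trivial⟩).tendsto.comp hpw
    exact le_of_tendsto_of_tendsto h1 h2 (huφA.mono fun k hk => hmins _ hk _)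
  exact ⟨φ, hy ▸ hyt⟩

/-- existence of optimal solutions of multilevel problems.  Consider an
`(n+2)`-level problem with variables `x i ∈ ℝ^{d i}` (`i : Fin (n+2)`, level `1` being index
`0`), upper-level feasible set `S₁`, objectives `f i`, value functions `F i`, reaction maps
`xstar i` (for `i ≠ 0`), and the extension maps `ext i` which complete a tuple of the first
`i + 1` variables by the optimal reactions of the lower levels, so that
`F i x = f i (ext i x)`.  Assume: (i) `S₁` is nonempty and compact; (ii) each `f i` is
continuous; (iii) for every lower level `i ≠ 0` and every admissible tuple, `xstar i x` is
the unique minimizer of `v ↦ F i (Function.update x i v)`; (iv) the (single-valued) optimal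
set mapping of each lower level is uniformly bounded near every admissible point.  Then each
reaction map `xstar i` is continuous, the reduced objective `F 0` is continuous, and `F 0`
attains its minimum over the admissible set (the multilevel problem has an optimal
solution). -/
theorem multilevel_existence
    (n : ℕ) (d : Fin (n + 2) → ℕ)
    (S₁ : Set (EuclideanSpace ℝ (Fin (d 0))))
    (hS₁ne : S₁.Nonempty) (hS₁comp : IsCompact S₁)
    (f : ∀ _ : Fin (n + 2), (∀ j, EuclideanSpace ℝ (Fin (d j))) → ℝ)
    (hf : ∀ i, Continuous (f i))
    (F : ∀ _ : Fin (n + 2), (∀ j, EuclideanSpace ℝ (Fin (d j))) → ℝ)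
    (xstar : ∀ i : Fin (n + 2),
      (∀ j, EuclideanSpace ℝ (Fin (d j))) → EuclideanSpace ℝ (Fin (d i)))
    (ext : ∀ _ : Fin (n + 2),
      (∀ j, EuclideanSpace ℝ (Fin (d j))) → ∀ j, EuclideanSpace ℝ (Fin (d j)))
    (hext_low : ∀ i x j, j ≤ i → ext i x j = x j)
    (hext_high : ∀ i x j, i < j → ext i x j = xstar j (ext i x))
    (hF : ∀ i x, F i x = f i (ext i x))
    (hdep : ∀ i : Fin (n + 2), i ≠ 0 → ∀ x y,
      (∀ j, j < i → x j = y j) → xstar i x = xstar i y)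
    (hmin : ∀ i : Fin (n + 2), i ≠ 0 → ∀ x, x 0 ∈ S₁ →
      (∀ v, F i (Function.update x i (xstar i x)) ≤ F i (Function.update x i v)) ∧
      (∀ v, (∀ w, F i (Function.update x i v) ≤ F i (Function.update x i w)) →
        v = xstar i x))
    (hbdd : ∀ i : Fin (n + 2), i ≠ 0 → ∀ xbar, xbar 0 ∈ S₁ →
      ∃ N ∈ 𝓝 xbar, Bornology.IsBounded (xstar i '' N)) :
    (∀ i : Fin (n + 2), i ≠ 0 → ContinuousOn (xstar i) {x | x 0 ∈ S₁}) ∧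
    ContinuousOn (F 0) {x | x 0 ∈ S₁} ∧
    ∃ x, x 0 ∈ S₁ ∧ ∀ y, y 0 ∈ S₁ → F 0 x ≤ F 0 y := by
  set A : Set (∀ j, EuclideanSpace ℝ (Fin (d j))) := {x | x 0 ∈ S₁} with hAdef
  have hmemA : ∀ x, x ∈ A ↔ x 0 ∈ S₁ := fun x => Iff.rfl
  have ext0 : ∀ i x, ext i x 0 = x 0 := fun i x => hext_low i x 0 (Fin.zero_le i)
  -- continuity of components of `ext i` given continuity of lower-level reactions
  have lemA : ∀ i : Fin (n+2), (∀ j, i < j → ContinuousOn (xstar j) A) →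
      ∀ j, ContinuousOn (fun x => ext i x j) A := by
    intro i hcs
    have key : ∀ m : ℕ, ∀ j : Fin (n+2), (j : ℕ) < m →
        ContinuousOn (fun x => ext i x j) A := by
      intro m
      induction m with
      | zero => intro j hj; exact absurd hj (Nat.not_lt_zero _)
      | succ m ih =>
        intro j hj
        by_cases hji : j ≤ i
        · exact ((continuous_apply j).continuousOn).congr (fun x _ => hext_low i x j hji)
        · push_neg at hji
          have hj0 : j ≠ 0 := Fin.pos_iff_ne_zero.mp (lt_of_le_of_lt (Fin.zero_le i) hji)
          set T : (∀ k, EuclideanSpace ℝ (Fin (d k))) → (∀ k, EuclideanSpace ℝ (Fin (d k))) :=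
            fun x k => if k < j then ext i x k else x k with hT
          have hTc : ContinuousOn T A := by
            apply continuousOn_pi.mpr
            intro k
            by_cases hk : k < j
            · have hk' : (k:ℕ) < (j:ℕ) := hk
              have heqk : (fun x => T x k) = fun x => ext i x k := by
                funext x; simp only [hT]; rw [if_pos hk]
              rw [heqk]; exact ih k (by omega)
            · have heqk : (fun x => T x k) = fun x => x k := by
                funext x; simp only [hT]; rw [if_neg hk]
              rw [heqk]; exact (continuous_apply k).continuousOn
          have hTA : Set.MapsTo T A A := by
            intro x hx
            have h0j : (0 : Fin (n+2)) < j := Fin.pos_of_ne_zero hj0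
            show T x 0 ∈ S₁
            simp only [hT]; rw [if_pos h0j, ext0]
            exact hx
          have heq : ∀ x, ext i x j = xstar j (T x) := by
            intro x
            rw [hext_high i x j hji]
            refine hdep j hj0 (ext i x) (T x) (fun k hk => ?_)
            simp only [hT]; rw [if_pos hk]
          exact ((hcs j hji).comp hTc hTA).congr (fun x _ => heq x)
    exact fun j => key (n+2) j j.isLt
  have lemExt : ∀ i : Fin (n+2), (∀ j, i < j → ContinuousOn (xstar j) A) →
      ContinuousOn (ext i) A := fun i h => continuousOn_pi.mpr (lemA i h)
  have lemF : ∀ i : Fin (n+2), (∀ j, i < j → ContinuousOn (xstar j) A) →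
      ContinuousOn (F i) A := by
    intro i h
    exact ((hf i).comp_continuousOn (lemExt i h)).congr (fun x _ => hF i x)
  -- downward induction: continuity of all reaction maps
  have main : ∀ m : ℕ, ∀ i : Fin (n+2), n + 2 - (i:ℕ) ≤ m → i ≠ 0 →
      ContinuousOn (xstar i) A := by
    intro m
    induction m with
    | zero => intro i hi _; have := i.isLt; omega
    | succ m ih =>
      intro i hi hi0
      have H : ∀ j, i < j → ContinuousOn (xstar j) A := by
        intro j hij
        have hij' : (i:ℕ) < (j:ℕ) := hij
        have hj0 : j ≠ 0 := Fin.pos_iff_ne_zero.mp (lt_of_le_of_lt (Fin.zero_le i) hij)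
        have hjlt := j.isLt
        exact ih j (by omega) hj0
      have hU : Continuous (fun p : (∀ j, EuclideanSpace ℝ (Fin (d j))) ×
          EuclideanSpace ℝ (Fin (d i)) => Function.update p.1 i p.2) := by
        apply continuous_pi
        intro k
        by_cases hk : k = i
        · subst hk
          have heqk : (fun p : (∀ j, EuclideanSpace ℝ (Fin (d j))) ×
              EuclideanSpace ℝ (Fin (d k)) => Function.update p.1 k p.2 k) =
              fun p => p.2 := by funext p; simp
          rw [heqk]; exact continuous_snd
        · have heqk : (fun p : (∀ j, EuclideanSpace ℝ (Fin (d j))) ×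
              EuclideanSpace ℝ (Fin (d i)) => Function.update p.1 i p.2 k) =
              fun p => p.1 k := by
            funext p; exact Function.update_of_ne hk _ _
          rw [heqk]; exact (continuous_apply k).comp continuous_fst
      have hUm : Set.MapsTo (fun p : (∀ j, EuclideanSpace ℝ (Fin (d j))) ×
          EuclideanSpace ℝ (Fin (d i)) => Function.update p.1 i p.2) (A ×ˢ Set.univ) A := by
        intro p hp
        show Function.update p.1 i p.2 0 ∈ S₁
        rw [Function.update_of_ne (Ne.symm hi0)]
        exact hp.1
      have hgc : ContinuousOn (fun p : (∀ j, EuclideanSpace ℝ (Fin (d j))) ×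
          EuclideanSpace ℝ (Fin (d i)) => F i (Function.update p.1 i p.2))
          (A ×ˢ Set.univ) :=
        (lemF i H).comp hU.continuousOn hUm
      exact minsel_continuousOn A (fun x v => F i (Function.update x i v)) (xstar i) hgc
        (fun x hx v => (hmin i hi0 x hx).1 v)
        (fun x hx v hv => (hmin i hi0 x hx).2 v hv)
        (fun x hx => hbdd i hi0 x hx)
  have part1 : ∀ i : Fin (n+2), i ≠ 0 → ContinuousOn (xstar i) A :=
    fun i hi => main (n+2) i (by omega) hi
  have H0 : ∀ j : Fin (n+2), (0:Fin (n+2)) < j → ContinuousOn (xstar j) A :=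
    fun j hj => part1 j (Fin.pos_iff_ne_zero.mp hj)
  have part2 : ContinuousOn (F 0) A := lemF 0 H0
  -- existence of a minimizer
  set c : EuclideanSpace ℝ (Fin (d 0)) → ∀ j, EuclideanSpace ℝ (Fin (d j)) :=
    fun v => Function.update (fun j => 0) 0 v with hc
  have hc0 : ∀ v, c v 0 = v := by intro v; simp [hc]
  have hcc : Continuous c := by
    apply continuous_pi
    intro k
    by_cases hk : k = 0
    · subst hk
      have heqk : (fun v => c v 0) = fun v => v := by funext v; simp [hc]
      rw [heqk]; exact continuous_id
    · have heqk : (fun v => c v k) = fun _ => (0 : EuclideanSpace ℝ (Fin (d k))) := by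
        funext v; simp only [hc]; exact Function.update_of_ne hk _ _
      rw [heqk]; exact continuous_const
  have hcext : ∀ x : ∀ j, EuclideanSpace ℝ (Fin (d j)), ext 0 x = ext 0 (c (x 0)) := by
    intro x
    have key : ∀ m : ℕ, ∀ j : Fin (n+2), (j:ℕ) < m → ext 0 x j = ext 0 (c (x 0)) j := by
      intro m
      induction m with
      | zero => intro j hj; exact absurd hj (Nat.not_lt_zero _)
      | succ m ih =>
        intro j hj
        by_cases hj0 : j = 0
        · subst hj0
          rw [hext_low 0 x 0 le_rfl, hext_low 0 _ 0 le_rfl, hc0]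
        · have h0j : (0 : Fin (n+2)) < j := Fin.pos_of_ne_zero hj0
          rw [hext_high 0 x j h0j, hext_high 0 _ j h0j]
          refine hdep j hj0 _ _ (fun k hk => ?_)
          have hk' : (k:ℕ) < (j:ℕ) := hk
          exact ih k (by omega)
    funext j
    exact key (n+2) j j.isLt
  have hFc : ∀ x : ∀ j, EuclideanSpace ℝ (Fin (d j)), F 0 x = F 0 (c (x 0)) := by
    intro x; rw [hF, hF, hcext x]
  have hcA : ∀ v ∈ S₁, c v ∈ A := by intro v hv; show c v 0 ∈ S₁; rw [hc0]; exact hv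
  have hGc : ContinuousOn (fun v => F 0 (c v)) S₁ :=
    part2.comp hcc.continuousOn hcA
  obtain ⟨v, hvS, hvmin⟩ := hS₁comp.exists_isMinOn hS₁ne hGc
  refine ⟨part1, part2, c v, by rw [hc0]; exact hvS, ?_⟩
  intro y hy
  calc F 0 (c v) ≤ F 0 (c (y 0)) := isMinOn_iff.mp hvmin (y 0) hy
    _ = F 0 y := (hFc y).symm
end

section
/- Consider the approximate n-level problem in which, for i = 2,…,n and t = 1,…,T_i, the iterates are x_i^{(t)} = Φ_i^{(t)}(x_1, x_2^{(T_2)}, …, x_{i−1}^{(T_{i−1})}, x_i^{(t−1)}) with differentiable update maps Φ_i^{(t)} and initial points x_i^{(0)} independent of all other variables, and let F̃_1(x_1) = f_1(x_1, x_2^{(T_2)}(x_1), …, x_n^{(T_n)}(x_1)) with f_1 differentiable. For i = 2,…,n and t = 1,…,T_i, let A_i^{(t)}, B_i^{(t)}, and C_{ij}^{(t)} (j = 2,…,i−1) denote the (suitably transposed) Jacobian matrices of Φ_i^{(t)} with respect to x_i, x_1, and x_j respectively, all evaluated at (x_1, x_2^{(T_2)}, …, x_{i−1}^{(T_{i−1})},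 x_i^{(t−1)}). Define recursively, for i = 2,…,n, Z_i = Σ_{t=1}^{T_i} ( Σ_{j=2}^{i−1} Z_j C_{ij}^{(t)} + B_i^{(t)} ) ∏_{s=t+1}^{T_i} A_i^{(s)}. Then for each i = 2,…,n the Jacobian of x_1 ↦ x_i^{(T_i)}(x_1) equals Z_i, and ∇_{x_1} F̃_1(x_1) = ∇_{x_1} f_1 + Σ_{i=2}^{n} Z_i ∇_{x_i} f_1, where the partial gradients of f_1 are evaluated at (x_1, x_2^{(T_2)}, …, x_n^{(T_n)}). -/
/-!
Everything is the chain rule through a tuple of variables. At a fixed level `i` the Jacobians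
`W t` of `x₁ ↦ X i t x₁` obey the linear recurrence `W t = A t ∘ W (t - 1) + (B t + ∑ⱼ C j t ∘ Z j)`
with `W 0 = 0` (the initial point is constant), and the sum-of-products formula for `Z i` is
exactly its unrolled solution. The Jacobians `Z j` of the levels `j < i` that enter the
recurrence are available by well-founded induction on the level, and the levels above `i` never
enter because `Φ i t` reads only the slots `j ≤ i`. The gradient of `F̃₁` is one more chain rule.
-/

/-- The (untransposed) partial Jacobian of a function `f` of a tuple of variables with
respect to the `j`-th slot, at the point `p`, as a continuous linear map.  (In the paper the
Jacobians are transposed so that compositions correspond to right multiplication; here we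
work directly with the linear maps.) -/
noncomputable def partialFDeriv {ι : Type*} [DecidableEq ι] {E : ι → Type*}
    [∀ i, NormedAddCommGroup (E i)] [∀ i, NormedSpace ℝ (E i)]
    {G : Type*} [NormedAddCommGroup G] [NormedSpace ℝ G]
    (f : (∀ i, E i) → G) (p : ∀ i, E i) (j : ι) : E j →L[ℝ] G :=
  fderiv ℝ (fun v => f (Function.update p j v)) (p j)

section ChainRule

open Function ContinuousLinearMap

variable {ι : Type*} [DecidableEq ι] [Fintype ι] {E : ι → Type*}
  [∀ i, NormedAddCommGroup (E i)] [∀ i, NormedSpace ℝ (E i)]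
  {F G : Type*} [NormedAddCommGroup F] [NormedSpace ℝ F] [NormedAddCommGroup G] [NormedSpace ℝ G]
  {f : (∀ i, E i) → G}

theorem partialFDeriv_eq_fderiv_comp {p : ∀ i, E i} (hf : DifferentiableAt ℝ f p) (j : ι) :
    partialFDeriv f p j = (fderiv ℝ f p).comp (.pi (Pi.single j (.id ℝ (E j)))) := by
  have hf' : HasFDerivAt f (fderiv ℝ f p) (update p j (p j)) := by
    rw [update_eq_self]; exact hf.hasFDerivAt
  exact (hf'.comp (p j) (hasFDerivAt_update p (p j))).fderiv

theorem hasFDerivAt_comp_pi {g : F → ∀ i, E i} {x : F} (hf : DifferentiableAt ℝ f (g x))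
    {Dg : ∀ i, F →L[ℝ] E i} (hg : ∀ i, HasFDerivAt (fun y => g y i) (Dg i) x) :
    HasFDerivAt (fun y => f (g y)) (∑ i, (partialFDeriv f (g x) i).comp (Dg i)) x := by
  refine HasFDerivAt.congr_fderiv (hf.hasFDerivAt.comp x (hasFDerivAt_pi.2 hg)) ?_
  ext v
  simp only [partialFDeriv_eq_fderiv_comp hf, _root_.sum_apply,
    ContinuousLinearMap.comp_apply, ← map_sum]
  congr 1
  ext j
  rw [Finset.sum_apply, Finset.sum_eq_single j
    (fun c _ hc => by rw [pi_apply, Pi.single_eq_of_ne' hc, zero_apply]) (by simp)]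
  simp

theorem hasFDerivAt_comp_pi_of_dependsOn {S : Finset ι} {g : F → ∀ i, E i} {x : F}
    (hfS : ∀ p q, (∀ i ∈ S, p i = q i) → f p = f q) (hf : DifferentiableAt ℝ f (g x))
    {Dg : ∀ i, F →L[ℝ] E i} (hg : ∀ i ∈ S, HasFDerivAt (fun y => g y i) (Dg i) x) :
    HasFDerivAt (fun y => f (g y)) (∑ i ∈ S, (partialFDeriv f (g x) i).comp (Dg i)) x := by
  -- slots outside `S` are frozen at `g x`, where `g` need not be differentiable
  set g' : F → ∀ i, E i := fun y i => if i ∈ S then g y i else g x i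
  have hg'x : g' x = g x := funext fun i => by simp [g']
  have hfg : (fun y => f (g y)) = fun y => f (g' y) :=
    funext fun y => hfS _ _ fun i hi => by simp [g', hi]
  have hg' : ∀ i, HasFDerivAt (fun y => g' y i) (if i ∈ S then Dg i else 0) x := by
    intro i
    by_cases hi : i ∈ S
    · simpa [g', hi] using hg i hi
    · simpa [g', hi] using hasFDerivAt_const (g x i) x
  have h := hasFDerivAt_comp_pi (hg'x ▸ hf) hg'
  rw [hg'x, ← Finset.sum_subset (Finset.subset_univ S) (fun i _ hi => by simp [hi])] at h
  rw [hfg]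
  convert h using 1
  exact Finset.sum_congr rfl fun i hi => by simp [hi]

theorem hasFDerivAt_comp_pi_of_apply_eq_self {o : ι} {S : Finset ι} (ho : o ∈ S)
    (hfS : ∀ p q, (∀ i ∈ S, p i = q i) → f p = f q) {g : E o → ∀ i, E i} {x : E o}
    (hf : DifferentiableAt ℝ f (g x)) (hgo : ∀ y, g y o = y)
    {Dg : ∀ i, E o →L[ℝ] E i} (hg : ∀ i ∈ S, i ≠ o → HasFDerivAt (fun y => g y i) (Dg i) x) :
    HasFDerivAt (fun y => f (g y))
      (partialFDeriv f (g x) o + ∑ i ∈ S.erase o, (partialFDeriv f (g x) i).comp (Dg i)) x := by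
  have hg' : ∀ i ∈ S, HasFDerivAt (fun y => g y i) (update Dg o (.id ℝ (E o)) i) x := by
    intro i hi
    rcases eq_or_ne i o with rfl | hio
    · simp only [hgo, update_self]
      exact hasFDerivAt_id x
    · simpa [update_of_ne hio] using hg i hi hio
  convert hasFDerivAt_comp_pi_of_dependsOn hfS hf hg' using 1
  rw [← Finset.add_sum_erase S _ ho, update_self, ContinuousLinearMap.comp_id]
  congr 1
  exact Finset.sum_congr rfl fun i hi => by rw [update_of_ne (Finset.ne_of_mem_erase hi)]

end ChainRule

section LinearRecurrence

open ContinuousLinearMap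

variable {𝕜 : Type*} [NontriviallyNormedField 𝕜] {E F : Type*} [NormedAddCommGroup E]
  [NormedSpace 𝕜 E] [NormedAddCommGroup F] [NormedSpace 𝕜 F]

def unrolledRecurrence (A : ℕ → F →L[𝕜] F) (Q : ℕ → E →L[𝕜] F) (T : ℕ) : E →L[𝕜] F :=
  ∑ t ∈ Finset.Icc 1 T, (((List.range' (t + 1) (T - t)).reverse.map A).prod).comp (Q t)

variable (A : ℕ → F →L[𝕜] F) (Q : ℕ → E →L[𝕜] F)

@[simp]
theorem unrolledRecurrence_zero : unrolledRecurrence A Q 0 = 0 := by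
  simp [unrolledRecurrence]

theorem unrolledRecurrence_succ (T : ℕ) :
    unrolledRecurrence A Q (T + 1) = (A (T + 1)).comp (unrolledRecurrence A Q T) + Q (T + 1) := by
  have hprod : ∀ t ∈ Finset.Icc 1 T,
      ((List.range' (t + 1) (T + 1 - t)).reverse.map A).prod =
        A (T + 1) * ((List.range' (t + 1) (T - t)).reverse.map A).prod := by
    intro t ht
    obtain ⟨-, htT⟩ := Finset.mem_Icc.1 ht
    rw [show T + 1 - t = (T - t) + 1 by omega, List.range'_concat,
      show t + 1 + 1 * (T - t) = T + 1 by omega]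
    simp
  rw [unrolledRecurrence, Finset.sum_Icc_succ_top (by omega), Nat.sub_self,
    Finset.sum_congr rfl fun t ht => by rw [hprod t ht], unrolledRecurrence, comp_finsetSum]
  simp [ContinuousLinearMap.mul_def, ContinuousLinearMap.comp_assoc, ContinuousLinearMap.one_def]

variable {A Q}

theorem hasFDerivAt_unrolledRecurrence {x : ℕ → E → F} {y : E} {T : ℕ}
    (h0 : HasFDerivAt (x 0) (0 : E →L[𝕜] F) y)
    (hstep : ∀ t < T, ∀ D : E →L[𝕜] F, HasFDerivAt (x t) D y →
      HasFDerivAt (x (t + 1)) ((A (t + 1)).comp D + Q (t + 1)) y) :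
    HasFDerivAt (x T) (unrolledRecurrence A Q T) y := by
  suffices ∀ t ≤ T, HasFDerivAt (x t) (unrolledRecurrence A Q t) y from this T le_rfl
  intro t ht
  induction t with
  | zero => simpa using h0
  | succ t ih =>
    rw [unrolledRecurrence_succ]
    exact hstep t ht _ (ih (by omega))

end LinearRecurrence

section Multilevel

open Function

variable {ι : Type*} [LinearOrder ι] [Fintype ι] {E : ι → Type*}
  [∀ i, NormedAddCommGroup (E i)] [∀ i, NormedSpace ℝ (E i)]

theorem hasFDerivAt_comp_update_lowerLevels {o i : ι} (hoi : o < i) {φ : (∀ j, E j) → E i}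
    (hφ : Differentiable ℝ φ) (hφdep : ∀ p q, (∀ j ≤ i, p j = q j) → φ p = φ q)
    {Y : ∀ j, E o → E j} (hYo : ∀ y, Y o y = y) {Z : ∀ j, E o →L[ℝ] E j} {y : E o}
    (hY : ∀ j, j ≠ o → j < i → HasFDerivAt (Y j) (Z j) y)
    {x : E o → E i} {D : E o →L[ℝ] E i} (hx : HasFDerivAt x D y) :
    HasFDerivAt (fun z => φ (update (fun j => Y j z) i (x z)))
      ((partialFDeriv φ (update (fun j => Y j y) i (x y)) i).comp D +
        (partialFDeriv φ (update (fun j => Y j y) i (x y)) o +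
          ∑ j ∈ Finset.univ.filter (fun j => j ≠ o ∧ j < i),
            (partialFDeriv φ (update (fun j => Y j y) i (x y)) j).comp (Z j))) y := by
  set S := Finset.univ.filter (· ≤ i)
  have hS : S.erase o = insert i (Finset.univ.filter fun j => j ≠ o ∧ j < i) := by
    ext j
    simp only [S, Finset.mem_erase, Finset.mem_insert, Finset.mem_filter, Finset.mem_univ,
      true_and]
    constructor
    · rintro ⟨hjo, hji⟩
      exact (eq_or_lt_of_le hji).imp id fun h => ⟨hjo, h⟩
    · rintro (rfl | ⟨hjo, hji⟩)
      exacts [⟨hoi.ne', le_rfl⟩, ⟨hjo, hji.le⟩]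
  have hg : ∀ j ∈ S, j ≠ o →
      HasFDerivAt (fun z => update (fun j => Y j z) i (x z) j) (update Z i D j) y := by
    intro j hj hjo
    rcases eq_or_ne j i with rfl | hji
    · simpa using hx
    · simpa [update_of_ne hji] using hY j hjo (lt_of_le_of_ne (by simpa [S] using hj) hji)
  convert hasFDerivAt_comp_pi_of_apply_eq_self (by simpa [S] using hoi.le)
    (fun p q h => hφdep p q fun j hj => h j (by simpa [S] using hj)) (hφ _)
    (fun z => by simp [update_of_ne hoi.ne, hYo]) hg using 1
  rw [hS, Finset.sum_insert (by simp), update_self, add_left_comm]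
  congr 2
  refine Finset.sum_congr rfl fun j hj => ?_
  rw [update_of_ne (Finset.mem_filter.1 hj).2.2.ne]

def iterationPoint {o : ι} (X : ∀ i, ℕ → E o → E i) (T : ι → ℕ) (i : ι) (t : ℕ) (y : E o) :
    ∀ j, E j :=
  update (fun j => X j (T j) y) i (X i (t - 1) y)

theorem hasFDerivAt_finalIterate {o : ι} (ho : IsBot o) {T : ι → ℕ}
    {Φ : ∀ i, ℕ → (∀ j, E j) → E i} (hΦdiff : ∀ i t, Differentiable ℝ (Φ i t))
    (hΦdep : ∀ i t p q, (∀ j ≤ i, p j = q j) → Φ i t p = Φ i t q)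
    {X : ∀ i, ℕ → E o → E i} (hXo : ∀ y, X o (T o) y = y)
    (hXinit : ∀ i ≠ o, ∀ y z, X i 0 y = X i 0 z)
    (hXrec : ∀ i ≠ o, ∀ t, 1 ≤ t → t ≤ T i → ∀ y, X i t y = Φ i t (iterationPoint X T i t y))
    {Z : ∀ i, E o → E o →L[ℝ] E i}
    (hZ : ∀ i ≠ o, ∀ y, Z i y =
      unrolledRecurrence (fun s => partialFDeriv (Φ i s) (iterationPoint X T i s y) i)
        (fun t => partialFDeriv (Φ i t) (iterationPoint X T i t y) o +
          ∑ j ∈ Finset.univ.filter (fun j => j ≠ o ∧ j < i),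
            (partialFDeriv (Φ i t) (iterationPoint X T i t y) j).comp (Z j y))
        (T i)) :
    ∀ i ≠ o, ∀ y, HasFDerivAt (X i (T i)) (Z i y) y := by
  intro i
  induction i using WellFoundedLT.induction with
  | _ i IH =>
  intro hio y
  have hoi : o < i := lt_of_le_of_ne (ho i) hio.symm
  rw [hZ i hio y]
  refine hasFDerivAt_unrolledRecurrence ?_ fun t ht D hD => ?_
  · rw [show X i 0 = fun _ => X i 0 y from funext fun z => hXinit i hio z y]
    exact hasFDerivAt_const _ _
  · rw [show X i (t + 1) = fun z => Φ i (t + 1) (update (fun j => X j (T j) z) i (X i t z))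
      from funext fun z => hXrec i hio (t + 1) (by omega) ht z]
    exact hasFDerivAt_comp_update_lowerLevels hoi (hΦdiff i (t + 1)) (hΦdep i (t + 1)) hXo
      (fun j hjo hji => IH j hji hjo y) hD

end Multilevel

/-- gradient formula for the approximate multilevel problem.  Consider an
`(n+2)`-level problem (levels indexed by `Fin (n+2)`, level `1` being index `0`) with
differentiable update maps `Φ i t` for the lower levels `i ≠ 0`, iterates
`X i t x₁ = Φ i t (x₁, X 1 (T 1) x₁, …, X (i-1) (T (i-1)) x₁, X i (t-1) x₁)` for
`t = 1, …, T i` whose initial points `X i 0` are independent of all other variables (the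
level-`0` "iterate" being `x₁` itself, and `Φ i t` depending only on the variables of levels
`≤ i`), and differentiable upper-level objective `f₁`, with reduced objective
`F̃₁ x₁ = f₁ (x₁, X 1 (T 1) x₁, …)`.  With `A i t x₁`, `B i t x₁`, `C i j t x₁` the partial
Jacobians of `Φ i t` with respect to the slots `i`, `0`, `j` at the corresponding evaluation
point, and `Z i` defined by the recursion
`Z i = ∑_{t=1}^{T i} (∑_{j≠0, j<i} Z j ⬝ C i j t + B i t) ∏_{s=t+1}^{T i} A i s`
(transposed-matrix form; below in linear-map form), the Jacobian of `x₁ ↦ X i (T i) x₁`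
equals `Z i` for every lower level `i`, and
`∇F̃₁ = ∇_{x₁} f₁ + ∑_{i≠0} Z i ∇_{x_i} f₁`, the partial gradients of `f₁` being evaluated
at `(x₁, X 1 (T 1) x₁, …)`. -/
theorem multilevel_gradient_formula
    (n : ℕ) (d : Fin (n + 2) → ℕ) (T : Fin (n + 2) → ℕ)
    (f₁ : (∀ j, EuclideanSpace ℝ (Fin (d j))) → ℝ)
    (hf₁ : Differentiable ℝ f₁)
    (Φ : ∀ i : Fin (n + 2), ℕ →
      (∀ j, EuclideanSpace ℝ (Fin (d j))) → EuclideanSpace ℝ (Fin (d i)))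
    (hΦdiff : ∀ i t, Differentiable ℝ (Φ i t))
    (hΦdep : ∀ (i : Fin (n + 2)) t p q, (∀ j, j ≤ i → p j = q j) → Φ i t p = Φ i t q)
    (X : ∀ i : Fin (n + 2), ℕ → EuclideanSpace ℝ (Fin (d 0)) → EuclideanSpace ℝ (Fin (d i)))
    (hX0 : ∀ t x₁, X 0 t x₁ = x₁)
    (hXinit : ∀ i : Fin (n + 2), i ≠ 0 → ∀ x₁ y₁, X i 0 x₁ = X i 0 y₁)
    (hXrec : ∀ i : Fin (n + 2), i ≠ 0 → ∀ t, 1 ≤ t → t ≤ T i → ∀ x₁,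
      X i t x₁ =
        Φ i t (Function.update (fun j => X j (T j) x₁) i (X i (t - 1) x₁)))
    (Z : ∀ i : Fin (n + 2),
      EuclideanSpace ℝ (Fin (d 0)) →
        (EuclideanSpace ℝ (Fin (d 0)) →L[ℝ] EuclideanSpace ℝ (Fin (d i))))
    (hZ : ∀ i : Fin (n + 2), i ≠ 0 → ∀ x₁,
      Z i x₁ =
        ∑ t ∈ Finset.Icc 1 (T i),
          (((List.range' (t + 1) (T i - t)).reverse.map (fun s =>
            partialFDeriv (Φ i s)
              (Function.update (fun j => X j (T j) x₁) i (X i (s - 1) x₁)) i)).prod).comp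
          ((partialFDeriv (Φ i t)
              (Function.update (fun j => X j (T j) x₁) i (X i (t - 1) x₁)) 0) +
            ∑ j ∈ Finset.univ.filter (fun j => j ≠ 0 ∧ j < i),
              (partialFDeriv (Φ i t)
                (Function.update (fun j' => X j' (T j') x₁) i (X i (t - 1) x₁)) j).comp
                (Z j x₁))) :
    (∀ i : Fin (n + 2), i ≠ 0 → ∀ x₁,
      HasFDerivAt (fun y => X i (T i) y) (Z i x₁) x₁) ∧
    (∀ x₁,
      fderiv ℝ (fun y => f₁ (fun j => X j (T j) y)) x₁ =
        partialFDeriv f₁ (fun j => X j (T j) x₁) 0 +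
          ∑ i ∈ Finset.univ.erase 0,
            (partialFDeriv f₁ (fun j => X j (T j) x₁) i).comp (Z i x₁)) := by
  have hlevels := hasFDerivAt_finalIterate (o := 0) Fin.zero_le hΦdiff hΦdep (hX0 _)
    hXinit hXrec hZ
  refine ⟨hlevels, fun x₁ => ?_⟩
  exact (hasFDerivAt_comp_pi_of_apply_eq_self (Finset.mem_univ 0)
    (fun p q h => congrArg f₁ (funext fun j => h j (Finset.mem_univ j))) (hf₁ _) (hX0 _)
    fun i _ hi => hlevels i hi x₁).fderiv
end

section
/- Let F : ℝ^{p} × ℝ^{d} → ℝ be differentiable in its second argument with (x,y) ↦ ∇_y F(x,y) Lipschitz continuous with constant L, fix y^{(0)} ∈ ℝ^{d} and step sizes α_1,…,α_T > 0, and define the gradient-descent iterates y^{(t)}(x) = y^{(t−1)}(x) − α_t ∇_y F(x, y^{(t−1)}(x)) for t = 1,…,T. Then for all x̂, x̌ ∈ ℝ^{p} and every t = 0,1,…,T, ‖y^{(t)}(x̂) − y^{(t)}(x̌)‖ ≤ ( ∏_{s=1}^{t} (1 + α_s L) − 1 ) ‖x̂ − x̌‖; in particular, x ↦ y^{(T)}(x)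 is Lipschitz continuous. -/
/-- Let `F : ℝ^p × ℝ^d → ℝ` be differentiable in its second argument with
`(x, y) ↦ ∇_y F x y` Lipschitz continuous with constant `L`, fix `y⁰ ∈ ℝ^d` and step sizes
`α 1, …, α T > 0`, and define the gradient-descent iterates
`y t x = y (t-1) x - α t • ∇_y F x (y (t-1) x)` for `t = 1, …, T`, all started from the same
initial point `y 0 x = y⁰`.  Then for all `xh, xc` and every `t = 0, 1, …, T`,
`‖y t xh - y t xc‖ ≤ (∏_{s=1}^{t} (1 + α s * L) - 1) * ‖xh - xc‖`; in particular
`x ↦ y T x` is Lipschitz continuous. -/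
theorem gradient_descent_iterates_lipschitz
    (p d : ℕ)
    (F : EuclideanSpace ℝ (Fin p) → EuclideanSpace ℝ (Fin d) → ℝ)
    (hdiff : ∀ x, Differentiable ℝ (F x))
    (L : ℝ) (hL0 : 0 ≤ L)
    (hL : ∀ xh yh xc yc,
      ‖gradient (F xh) yh - gradient (F xc) yc‖ ≤ L * (‖xh - xc‖ + ‖yh - yc‖))
    (T : ℕ) (α : ℕ → ℝ) (hα : ∀ t, 1 ≤ t → t ≤ T → 0 < α t)
    (y0 : EuclideanSpace ℝ (Fin d))
    (y : ℕ → EuclideanSpace ℝ (Fin p) → EuclideanSpace ℝ (Fin d))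
    (hy0 : ∀ x, y 0 x = y0)
    (hy : ∀ t, 1 ≤ t → t ≤ T → ∀ x,
      y t x = y (t - 1) x - α t • gradient (F x) (y (t - 1) x)) :
    (∀ t ≤ T, ∀ xh xc,
      ‖y t xh - y t xc‖ ≤ (∏ s ∈ Finset.Icc 1 t, (1 + α s * L) - 1) * ‖xh - xc‖) ∧
    ∃ K : NNReal, LipschitzWith K (y T) := by
  have hprod : ∀ t ≤ T, (1 : ℝ) ≤ ∏ s ∈ Finset.Icc 1 t, (1 + α s * L) := by
    intro t ht
    have h := Finset.prod_le_prod (f := fun _ : ℕ => (1:ℝ))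
      (g := fun s => 1 + α s * L) (s := Finset.Icc 1 t)
      (fun _ _ => zero_le_one)
      (fun s hs => by
        simp only [Finset.mem_Icc] at hs
        show (1:ℝ) ≤ 1 + α s * L
        nlinarith [mul_nonneg (hα s hs.1 (hs.2.trans ht)).le hL0])
    simpa using h
  have main : ∀ t ≤ T, ∀ xh xc,
      ‖y t xh - y t xc‖ ≤ (∏ s ∈ Finset.Icc 1 t, (1 + α s * L) - 1) * ‖xh - xc‖ := by
    intro t
    induction t with
    | zero =>
      intro _ xh xc
      simp [hy0]
    | succ t ih =>
      intro ht xh xc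
      have htT : t ≤ T := Nat.le_of_succ_le ht
      have hrec_h := hy (t + 1) (Nat.le_add_left 1 t) ht xh
      have hrec_c := hy (t + 1) (Nat.le_add_left 1 t) ht xc
      simp only [Nat.add_sub_cancel] at hrec_h hrec_c
      have hIH := ih htT xh xc
      have hα' := hα (t + 1) (Nat.le_add_left 1 t) ht
      have hgrad := hL xh (y t xh) xc (y t xc)
      have hnorm : ‖y (t + 1) xh - y (t + 1) xc‖ ≤
          ‖y t xh - y t xc‖ + α (t + 1) *
            ‖gradient (F xh) (y t xh) - gradient (F xc) (y t xc)‖ := by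
        rw [hrec_h, hrec_c]
        have : y t xh - α (t + 1) • gradient (F xh) (y t xh) -
            (y t xc - α (t + 1) • gradient (F xc) (y t xc)) =
            (y t xh - y t xc) - α (t + 1) •
              (gradient (F xh) (y t xh) - gradient (F xc) (y t xc)) := by
          module
        rw [this]
        calc _ ≤ ‖y t xh - y t xc‖ + ‖α (t + 1) •
              (gradient (F xh) (y t xh) - gradient (F xc) (y t xc))‖ :=
            norm_sub_le _ _
          _ = ‖y t xh - y t xc‖ + |α (t + 1)| *
              ‖gradient (F xh) (y t xh) - gradient (F xc) (y t xc)‖ := by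
            rw [norm_smul, Real.norm_eq_abs]
          _ = _ := by rw [abs_of_pos hα']
      rw [Finset.prod_Icc_succ_top (Nat.le_add_left 1 t)]
      have hP := hprod t htT
      have hxc : (0:ℝ) ≤ ‖xh - xc‖ := norm_nonneg _
      have hprev : (0:ℝ) ≤ ‖y t xh - y t xc‖ := norm_nonneg _
      nlinarith [mul_nonneg (le_of_lt hα') hL0,
        mul_le_mul_of_nonneg_left hgrad (le_of_lt hα')]
  refine ⟨main, ⟨(∏ s ∈ Finset.Icc 1 T, (1 + α s * L) - 1).toNNReal, ?_⟩⟩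
  apply LipschitzWith.of_dist_le_mul
  intro xh xc
  have := main T le_rfl xh xc
  rw [dist_eq_norm, dist_eq_norm]
  calc ‖y T xh - y T xc‖ ≤ _ := this
    _ ≤ _ := by
      apply mul_le_mul_of_nonneg_right _ (norm_nonneg _)
      exact Real.le_coe_toNNReal _
end
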